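/- An r×s matrix B over ℚ is totally non-singular if and only if the r×(r+s) block matrix (I_r | B), obtained by adjoining the r×r identity matrix on the left of B, is highly non-singular. -/

import Mathlib

/-- An `r × n` matrix over `ℚ` is *highly non-singular* if every `r × r` submatrix formed
by choosing `r` of its columns is non-singular.  (Here the columns may be indexed by an
arbitrary type, e.g. `Fin r ⊕ Fin s` for an `r × (r + s)` matrix.) -/
def HighlyNonSingular {r : ℕ} {n : Type*} (A : Matrix (Fin r) n ℚ) : Prop :=
  ∀ c : Fin r → n, Function.Injective c → (A.submatrix id c).det ≠ 0

/-- A matrix over `ℚ` is *totally non-singular* if every minor of every size (formed from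
any choice of distinct rows and distinct columns) is non-zero. -/
def TotallyNonSingular {r s : ℕ} (A : Matrix (Fin r) (Fin s) ℚ) : Prop :=
  ∀ (k : ℕ) (ri : Fin k → Fin r) (ci : Fin k → Fin s),
    Function.Injective ri → Function.Injective ci → (A.submatrix ri ci).det ≠ 0

/-!
Choosing `r` columns of `(I | B)` means choosing a set `J` of columns of `B` together with the
identity columns `eₐ` for `a` outside a set `I` of rows, with `|I| = |J|`. Ordering rows and
columns so that the identity columns come last gives a block lower-triangular matrix with
diagonal blocks `B[I, J]` and `1`, so the selected maximal minor is `± det B[I, J]`; every pair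
`(I, J)` of equal size arises in this way.
-/

open Function Matrix

namespace Matrix

variable {ι m n o R : Type*}

theorem det_submatrix_id_ne_zero_iff_of_range_eq [Fintype m] [DecidableEq m] [CommRing R]
    (A : Matrix m o R) {c c' : m → o}
    (hc : Injective c) (hc' : Injective c') (h : Set.range c = Set.range c') :
    (A.submatrix id c).det ≠ 0 ↔ (A.submatrix id c').det ≠ 0 := by
  set σ : Equiv.Perm m :=
    (Equiv.ofInjective c hc).trans ((Equiv.setCongr h).trans (Equiv.ofInjective c' hc').symm)
  have hσ : c' ∘ σ = c := funext fun i => Equiv.apply_ofInjective_symm hc' _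
  have : A.submatrix id c = (A.submatrix id c').submatrix id σ := by rw [← hσ]; rfl
  rw [this, det_permute']
  rcases Int.units_eq_one_or (Equiv.Perm.sign σ) with hsign | hsign <;> simp [hsign]

/-- The columns of `fromCols 1 B` with column `ci i` of `B` at position `ri i` and the identity
column `a` at every other position `a`. -/
noncomputable def augmentedCols (ri : ι → m) (ci : ι → n) : m → m ⊕ n :=
  extend ri (Sum.inr ∘ ci) Sum.inl

variable {ri : ι → m} {ci : ι → n}

theorem augmentedCols_apply_of_mem_range (hri : Injective ri) (i : ι) :
    augmentedCols ri ci (ri i) = Sum.inr (ci i) :=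
  hri.extend_apply _ _ i

theorem augmentedCols_apply_of_notMem_range {a : m} (ha : a ∉ Set.range ri) :
    augmentedCols ri ci a = Sum.inl a :=
  extend_apply' _ _ a ha

theorem injective_augmentedCols (hri : Injective ri) (hci : Injective ci) :
    Injective (augmentedCols ri ci) := by
  intro a b hab
  by_cases ha : a ∈ Set.range ri <;> by_cases hb : b ∈ Set.range ri
  · obtain ⟨i, rfl⟩ := ha
    obtain ⟨j, rfl⟩ := hb
    simp only [augmentedCols_apply_of_mem_range hri, Sum.inr.injEq] at hab
    rw [hci hab]
  · obtain ⟨i, rfl⟩ := ha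
    simp [augmentedCols_apply_of_mem_range hri, augmentedCols_apply_of_notMem_range hb] at hab
  · obtain ⟨j, rfl⟩ := hb
    simp [augmentedCols_apply_of_mem_range hri, augmentedCols_apply_of_notMem_range ha] at hab
  · simpa [augmentedCols_apply_of_notMem_range ha, augmentedCols_apply_of_notMem_range hb] using hab

theorem range_augmentedCols (hri : Injective ri) :
    Set.range (augmentedCols ri ci) = Sum.inl '' (Set.range ri)ᶜ ∪ Sum.inr '' Set.range ci := by
  ext x
  constructor
  · rintro ⟨a, rfl⟩
    by_cases ha : a ∈ Set.range ri
    · obtain ⟨i, rfl⟩ := ha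
      exact Or.inr ⟨ci i, ⟨i, rfl⟩, (augmentedCols_apply_of_mem_range hri i).symm⟩
    · exact Or.inl ⟨a, ha, (augmentedCols_apply_of_notMem_range ha).symm⟩
  · rintro (⟨a, ha, rfl⟩ | ⟨_, ⟨i, rfl⟩, rfl⟩)
    · exact ⟨a, augmentedCols_apply_of_notMem_range ha⟩
    · exact ⟨ri i, augmentedCols_apply_of_mem_range hri i⟩

theorem exists_range_augmentedCols_eq [Fintype m] [Fintype n] {c : m → m ⊕ n}
    (hc : Injective c) :
    ∃ (k : ℕ) (ri : Fin k → m) (ci : Fin k → n),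
      Injective ri ∧ Injective ci ∧ Set.range (augmentedCols ri ci) = Set.range c := by
  classical
  set u := Finset.univ.image c
  have hcard : (u.toLeft)ᶜ.card = u.toRight.card := by
    have := Finset.card_toLeft_add_card_toRight (u := u)
    rw [Finset.card_image_of_injective _ hc, Finset.card_univ] at this
    rw [Finset.card_compl]
    omega
  set eS := (u.toLeft)ᶜ.equivFinOfCardEq rfl
  set eT := u.toRight.equivFinOfCardEq hcard.symm
  refine ⟨_, (↑) ∘ eS.symm, (↑) ∘ eT.symm, Subtype.val_injective.comp eS.symm.injective,
    Subtype.val_injective.comp eT.symm.injective, ?_⟩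
  rw [range_augmentedCols (Subtype.val_injective.comp eS.symm.injective), EquivLike.range_comp,
    EquivLike.range_comp, Subtype.range_coe, Subtype.range_coe]
  ext (a | b) <;> simp [u]

theorem det_fromCols_one_submatrix_augmentedCols [Fintype ι] [DecidableEq ι] [Fintype m]
    [DecidableEq m] [CommRing R] (B : Matrix m n R) (ci : ι → n) (hri : Injective ri) :
    ((fromCols 1 B).submatrix id (augmentedCols ri ci)).det = (B.submatrix ri ci).det := by
  classical
  let e : ι ⊕ ↥(Set.range ri)ᶜ ≃ m :=
    ((Equiv.ofInjective ri hri).sumCongr (Equiv.refl _)).trans (Equiv.Set.sumCompl _)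
  have : ((fromCols 1 B).submatrix id (augmentedCols ri ci)).submatrix e e =
      fromBlocks (B.submatrix ri ci) 0 (B.submatrix (↑) ci) 1 := by
    ext (i | x) (j | y)
    · simp [e, augmentedCols_apply_of_mem_range hri]
    · have hne : ri i ≠ y := fun h => y.2 ⟨i, h⟩
      simp [e, augmentedCols_apply_of_notMem_range y.2, hne]
    · simp [e, augmentedCols_apply_of_mem_range hri]
    · simp [e, augmentedCols_apply_of_notMem_range y.2, one_apply, Subtype.ext_iff]
  rw [← det_submatrix_equiv_self e, this, det_fromBlocks_zero₁₂, det_one, mul_one]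

end Matrix

/-- Lemma 2.1 (ii): an `r × s` matrix `B` over `ℚ` is totally non-singular if and only if
the `r × (r + s)` block matrix `(I_r | B)` is highly non-singular. -/
theorem totallyNonSingular_iff_augmented_highlyNonSingular (r s : ℕ)
    (B : Matrix (Fin r) (Fin s) ℚ) :
    TotallyNonSingular B ↔
      HighlyNonSingular (Matrix.fromCols (1 : Matrix (Fin r) (Fin r) ℚ) B) := by
  constructor
  · intro hB c hc
    obtain ⟨k, ri, ci, hri, hci, hrange⟩ := exists_range_augmentedCols_eq hc
    rw [det_submatrix_id_ne_zero_iff_of_range_eq _ hc (injective_augmentedCols hri hci)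
      hrange.symm, det_fromCols_one_submatrix_augmentedCols B ci hri]
    exact hB k ri ci hri hci
  · intro hA k ri ci hri hci
    rw [← det_fromCols_one_submatrix_augmentedCols B ci hri]
    exact hA _ (injective_augmentedCols hri hci)
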